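/- Suppose that for every positive integer n, n·1_R is not a zero divisor in R. A polynomial p ∈ R[X_1,…,X_N] satisfies M_{jk}(p) = 0 for all pairs of distinct indices j, k ∈ {1,…,N} if and only if p = q(X_1²+⋯+X_N²) for some single-variable polynomial q(T) ∈ R[T]. Moreover, if such a p is nonzero and homogeneous of degree d, then d is even and p = c·(X·X)^{d/2} for some c ∈ R. -/

import Mathlib

open MvPolynomial

/-- The rotation generator `M_{jk} p = X_j ∂_k p − X_k ∂_j p`. -/
noncomputable def rot {R : Type*} [CommRing R] {N : ℕ} (j k : Fin N)
    (p : MvPolynomial (Fin N) R) : MvPolynomial (Fin N) R :=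
  X j * pderiv k p - X k * pderiv j p

/-- The Laplacian `Δ p = Σ_j ∂_j² p`. -/
noncomputable def lap {R : Type*} [CommRing R] {N : ℕ}
    (p : MvPolynomial (Fin N) R) : MvPolynomial (Fin N) R :=
  ∑ j, pderiv j (pderiv j p)

/-- The polynomial `X·X = X_1² + ⋯ + X_N²`. -/
noncomputable def XX (R : Type*) [CommRing R] (N : ℕ) : MvPolynomial (Fin N) R :=
  ∑ j, X j ^ 2

/-!
Euler's identity together with `X_j ∂_k p = X_k ∂_j p` gives `(X·X) ∂_k p = d X_k p` for a
rotation-invariant `p` homogeneous of degree `d`; differentiating once more and summing over `k`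
yields `(X·X) Δp = d (N + d - 2) p`. The Laplacian commutes with the rotations, so `Δp` is again
invariant, of degree `d - 2`, and by induction `Δp = c (X·X)^((d-2)/2)`. Cancelling the
non-zero-divisor `d (N + d - 2)` gives `p = a (X·X)^(d/2)`, with `a` read off by evaluating at a
unit vector; for odd `d` this forces `p = 0` by comparing degrees. A general invariant `p` is
handled componentwise, since the rotations preserve homogeneous components.
-/

open scoped nonZeroDivisors

namespace MvPolynomial

variable {σ R : Type*} [CommSemiring R]

lemma eq_zero_of_C_mul_eq_zero {c : R} (hc : c ∈ R⁰) {f : MvPolynomial σ R}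
    (h : C c * f = 0) : f = 0 := by
  ext m
  simpa [mul_comm c] using hc.1 (coeff m f) (by simpa using congr_arg (coeff m) h)

lemma pderiv_pderiv_X (i j n : σ) : pderiv i (pderiv j (X n : MvPolynomial σ R)) = 0 := by
  classical
  rw [pderiv_X, Pi.single_apply]
  split_ifs <;> simp

lemma pderiv_pderiv_comm (i j : σ) (p : MvPolynomial σ R) :
    pderiv i (pderiv j p) = pderiv j (pderiv i p) := by
  induction p using MvPolynomial.induction_on with
  | C a => simp
  | add p q hp hq => simp [hp, hq]
  | mul_X p n h =>
    simp only [pderiv_mul, map_add, pderiv_pderiv_X, h]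
    ring

lemma IsHomogeneous.pderiv_eq_zero {p : MvPolynomial σ R} (hp : p.IsHomogeneous 0) (i : σ) :
    pderiv i p = 0 := by
  rw [totalDegree_eq_zero_iff_eq_C.mp ((totalDegree_zero_iff_isHomogeneous σ).mpr hp), pderiv_C]

lemma homogeneousComponent_map_of_isHomogeneous (f : MvPolynomial σ R →ₗ[R] MvPolynomial σ R)
    (hf : ∀ n p, p.IsHomogeneous n → (f p).IsHomogeneous n) (n : ℕ) (p : MvPolynomial σ R) :
    homogeneousComponent n (f p) = f (homogeneousComponent n p) := by
  conv_lhs => rw [← sum_homogeneousComponent p]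
  rw [map_sum, map_sum, Finset.sum_eq_single n]
  · rw [homogeneousComponent_of_mem (hf n _ (homogeneousComponent_isHomogeneous n p)), if_pos rfl]
  · intro i _ hin
    rw [homogeneousComponent_of_mem (hf i _ (homogeneousComponent_isHomogeneous i p)),
      if_neg (Ne.symm hin)]
  · intro hn
    rw [homogeneousComponent_eq_zero n p (by simpa using hn), map_zero, map_zero]

end MvPolynomial

section

variable {R : Type*} [CommRing R] {N : ℕ}

noncomputable def rotLinearMap (j k : Fin N) :
    MvPolynomial (Fin N) R →ₗ[R] MvPolynomial (Fin N) R :=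
  LinearMap.mulLeft R (X j) ∘ₗ (pderiv k).toLinearMap -
    LinearMap.mulLeft R (X k) ∘ₗ (pderiv j).toLinearMap

lemma coe_rotLinearMap (j k : Fin N) : ⇑(rotLinearMap (R := R) j k) = rot j k := rfl

lemma isHomogeneous_rot {p : MvPolynomial (Fin N) R} {n : ℕ} (hp : p.IsHomogeneous n)
    (j k : Fin N) : (rot j k p).IsHomogeneous n := by
  cases n with
  | zero => simp [rot, hp.pderiv_eq_zero, isHomogeneous_zero]
  | succ m =>
    have h (i l : Fin N) : (X i * pderiv l p).IsHomogeneous (m + 1) := by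
      simpa [add_comm] using (isHomogeneous_X R i).mul hp.pderiv
    exact (h j k).sub (h k j)

lemma homogeneousComponent_rot (n : ℕ) (j k : Fin N) (p : MvPolynomial (Fin N) R) :
    homogeneousComponent n (rot j k p) = rot j k (homogeneousComponent n p) :=
  homogeneousComponent_map_of_isHomogeneous (rotLinearMap j k)
    (fun _ _ hp => isHomogeneous_rot hp j k) n p

lemma pderiv_XX (k : Fin N) : pderiv k (XX R N) = 2 * X k := by
  simp [XX, pderiv_X, Pi.single_apply]

lemma eval_single_XX (i : Fin N) : eval (Pi.single i 1) (XX R N) = 1 := by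
  simp [XX, Pi.single_apply]

lemma isHomogeneous_XX_pow (n : ℕ) : (XX R N ^ n).IsHomogeneous (2 * n) :=
  (IsHomogeneous.sum _ _ 2 fun j _ => isHomogeneous_X_pow j 2).pow n

lemma rot_XX_pow (j k : Fin N) (n : ℕ) : rot j k (XX R N ^ n) = 0 := by
  simp only [rot, pderiv_pow, pderiv_XX]
  ring

lemma rot_aeval_XX (j k : Fin N) (q : Polynomial R) :
    rot j k (Polynomial.aeval (XX R N) q) = 0 := by
  rw [Polynomial.aeval_eq_sum_range, ← coe_rotLinearMap, map_sum]
  exact Finset.sum_eq_zero fun i _ => by rw [map_smul, coe_rotLinearMap, rot_XX_pow, smul_zero]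

lemma lap_sub (p q : MvPolynomial (Fin N) R) : lap (p - q) = lap p - lap q := by
  simp only [lap, map_sub, Finset.sum_sub_distrib]

lemma lap_pderiv (k : Fin N) (p : MvPolynomial (Fin N) R) :
    lap (pderiv k p) = pderiv k (lap p) := by
  simp only [lap, map_sum, pderiv_pderiv_comm _ k]

lemma lap_X_mul (j : Fin N) (q : MvPolynomial (Fin N) R) :
    lap (X j * q) = 2 * pderiv j q + X j * lap q := by
  classical
  have h (l : Fin N) : pderiv l (pderiv l (X j * q)) =
      2 * (pderiv l (X j) * pderiv l q) + X j * pderiv l (pderiv l q) := by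
    simp only [pderiv_mul, map_add, pderiv_pderiv_X]
    ring
  simp only [lap, h, Finset.sum_add_distrib, ← Finset.mul_sum, pderiv_X, Pi.single_apply, ite_mul,
    one_mul, zero_mul, Finset.sum_ite_eq, Finset.mem_univ, if_true]

lemma isHomogeneous_lap {p : MvPolynomial (Fin N) R} {d : ℕ} (hp : p.IsHomogeneous d) :
    (lap p).IsHomogeneous (d - 2) :=
  IsHomogeneous.sum _ _ _ fun j _ => by
    simpa [Nat.sub_sub] using (hp.pderiv (i := j)).pderiv (i := j)

lemma lap_rot (j k : Fin N) (p : MvPolynomial (Fin N) R) : lap (rot j k p) = rot j k (lap p) := by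
  rw [rot, lap_sub, lap_X_mul, lap_X_mul, rot, lap_pderiv, lap_pderiv, pderiv_pderiv_comm j k]
  ring

section RotationInvariant

variable {p : MvPolynomial (Fin N) R} {d : ℕ}

lemma XX_mul_pderiv_of_rot_eq_zero (hp : p.IsHomogeneous d)
    (hrot : ∀ j k : Fin N, j ≠ k → rot j k p = 0) (k : Fin N) :
    XX R N * pderiv k p = d • (X k * p) := by
  have hswap (j : Fin N) : X j * pderiv k p = X k * pderiv j p := by
    obtain rfl | hjk := eq_or_ne j k
    · rfl
    · exact sub_eq_zero.mp (hrot j k hjk)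
  calc XX R N * pderiv k p = ∑ j, X j * (X j * pderiv k p) := by
        simp only [XX, Finset.sum_mul, pow_two, mul_assoc]
    _ = X k * ∑ j, X j * pderiv j p := by
        simp only [hswap, Finset.mul_sum, mul_left_comm (X _) (X k)]
    _ = d • (X k * p) := by rw [hp.sum_X_mul_pderiv, mul_smul_comm]

lemma XX_mul_lap_of_rot_eq_zero (hp : p.IsHomogeneous d)
    (hrot : ∀ j k : Fin N, j ≠ k → rot j k p = 0) :
    XX R N * lap p = C ((d : R) * (N + d - 2)) * p := by
  have hsum : ∑ k, pderiv k (XX R N * pderiv k p) = ∑ k, pderiv k (d • (X k * p)) :=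
    Finset.sum_congr rfl fun k _ => by rw [XX_mul_pderiv_of_rot_eq_zero hp hrot k]
  have lhs : ∑ k, pderiv k (XX R N * pderiv k p) = 2 * (d • p) + XX R N * lap p := by
    simp only [pderiv_mul, pderiv_XX, Finset.sum_add_distrib, lap, Finset.mul_sum, mul_assoc,
      ← hp.sum_X_mul_pderiv]
  have rhs : ∑ k, pderiv k (d • (X k * p)) = d • (N • p + d • p) := by
    simp only [map_nsmul, pderiv_mul, pderiv_X_self, one_mul, ← Finset.smul_sum,
      Finset.sum_add_distrib, hp.sum_X_mul_pderiv, Finset.sum_const, Finset.card_univ,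
      Fintype.card_fin]
  rw [lhs, rhs] at hsum
  simp only [nsmul_eq_mul] at hsum
  simp only [map_mul, map_sub, map_add, map_natCast, map_ofNat]
  linear_combination hsum

lemma rot_lap_eq_zero (hrot : ∀ j k : Fin N, j ≠ k → rot j k p = 0) (j k : Fin N)
    (hjk : j ≠ k) : rot j k (lap p) = 0 := by
  rw [← lap_rot, hrot j k hjk]
  simp [lap]

lemma rot_homogeneousComponent_eq_zero (hrot : ∀ j k : Fin N, j ≠ k → rot j k p = 0) (n : ℕ)
    (j k : Fin N) (hjk : j ≠ k) : rot j k (homogeneousComponent n p) = 0 := by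
  rw [← homogeneousComponent_rot, hrot j k hjk, map_zero]

end RotationInvariant

lemma exists_eq_C_mul_XX_pow_of_C_mul_eq (hN : 0 < N) {m c : R} (hm : m ∈ R⁰)
    {p : MvPolynomial (Fin N) R} {e : ℕ} (h : C m * p = C c * XX R N ^ e) :
    ∃ a, p = C a * XX R N ^ e := by
  set x : Fin N → R := Pi.single ⟨0, hN⟩ 1
  have hc : c = m * eval x p := by
    simpa [x, eval_single_XX] using congr_arg (eval x) h.symm
  refine ⟨eval x p, eq_of_sub_eq_zero (eq_zero_of_C_mul_eq_zero hm ?_)⟩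
  rw [mul_sub, h, hc, C_mul]
  ring

theorem exists_eq_C_mul_XX_pow_of_rot_eq_zero (hN : 2 ≤ N)
    (hR : ∀ n : ℕ, 0 < n → (n : R) ∈ R⁰) {d : ℕ} {p : MvPolynomial (Fin N) R}
    (hp : p.IsHomogeneous d) (hrot : ∀ j k : Fin N, j ≠ k → rot j k p = 0) :
    ∃ c, p = C c * XX R N ^ (d / 2) := by
  induction d using Nat.twoStepInduction generalizing p with
  | zero =>
    exact ⟨coeff 0 p, by
      simpa using totalDegree_eq_zero_iff_eq_C.mp ((totalDegree_zero_iff_isHomogeneous _).mpr hp)⟩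
  | one =>
    have hlap : lap p = 0 := Finset.sum_eq_zero fun j _ => (hp.pderiv (i := j)).pderiv_eq_zero j
    have h := XX_mul_lap_of_rot_eq_zero hp hrot
    rw [hlap, mul_zero, show ((1 : ℕ) : R) * (N + (1 : ℕ) - 2) = ((N - 1 : ℕ) : R) by
      push_cast [Nat.cast_sub (by omega : 1 ≤ N)]; ring] at h
    exact ⟨0, by simpa using eq_zero_of_C_mul_eq_zero (hR (N - 1) (by omega)) h.symm⟩
  | more n ih _ =>
    obtain ⟨c, hc⟩ := ih (by simpa using isHomogeneous_lap hp) (rot_lap_eq_zero hrot)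
    refine exists_eq_C_mul_XX_pow_of_C_mul_eq (by omega) (hR ((n + 2) * (N + n)) (by positivity))
      (c := c) ?_
    rw [show (((n + 2) * (N + n) : ℕ) : R) = (n + 2 : ℕ) * (N + (n + 2 : ℕ) - 2) by
        push_cast; ring,
      ← XX_mul_lap_of_rot_eq_zero hp hrot, hc, show (n + 2) / 2 = n / 2 + 1 by omega]
    ring

theorem exists_eq_aeval_XX_of_rot_eq_zero (hN : 2 ≤ N)
    (hR : ∀ n : ℕ, 0 < n → (n : R) ∈ R⁰) {p : MvPolynomial (Fin N) R}
    (hrot : ∀ j k : Fin N, j ≠ k → rot j k p = 0) :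
    ∃ q : Polynomial R, p = Polynomial.aeval (XX R N) q := by
  choose c hc using fun n => exists_eq_C_mul_XX_pow_of_rot_eq_zero hN hR
    (homogeneousComponent_isHomogeneous n p) (rot_homogeneousComponent_eq_zero hrot n)
  refine ⟨∑ n ∈ Finset.range (p.totalDegree + 1), Polynomial.monomial (n / 2) (c n), ?_⟩
  conv_lhs => rw [← sum_homogeneousComponent p]
  simp only [map_sum, Polynomial.aeval_monomial, algebraMap_eq, hc]

end

/-- over a ring in which positive integer multiples of `1` are not zero
divisors, `p` is annihilated by all rotation generators iff it is a one-variable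
polynomial evaluated at `X·X`; moreover a nonzero homogeneous such `p` of degree `d`
has `d` even and `p = c·(X·X)^{d/2}`. -/
theorem stmt2 {R : Type*} [CommRing R] {N : ℕ} (hN : 2 ≤ N)
    (hR : ∀ n : ℕ, 0 < n → (n : R) ∈ nonZeroDivisors R)
    (p : MvPolynomial (Fin N) R) :
    ((∀ j k : Fin N, j ≠ k → rot j k p = 0) ↔
      ∃ q : Polynomial R, p = Polynomial.aeval (XX R N) q) ∧
    (∀ d : ℕ, p ≠ 0 → p.IsHomogeneous d →
      (∀ j k : Fin N, j ≠ k → rot j k p = 0) →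
      Even d ∧ ∃ c : R, p = C c * XX R N ^ (d / 2)) := by
  refine ⟨⟨exists_eq_aeval_XX_of_rot_eq_zero hN hR, ?_⟩, fun d hp0 hp hrot => ?_⟩
  · rintro ⟨q, rfl⟩ j k -
    exact rot_aeval_XX j k q
  · obtain ⟨c, hc⟩ := exists_eq_C_mul_XX_pow_of_rot_eq_zero hN hR hp hrot
    have hp_deg : p.IsHomogeneous (2 * (d / 2)) := by
      simpa [hc] using (isHomogeneous_C _ c).mul (isHomogeneous_XX_pow (R := R) (N := N) (d / 2))
    exact ⟨⟨d / 2, by have := hp.inj_right hp_deg hp0; omega⟩, c, hc⟩
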